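/- Let g = g₁ + g₂ where g₁ : ℝⁿ → ℝ is convex and L-Lipschitz and g₂ : ℝⁿ → ℝ is any measurable function, with ∫ exp(−g₁(x) − g₂(x)) dx = 1. Let λ > 0, let g₁^λ be the Moreau–Yosida envelope of g₁, let Z_λ = ∫ exp(−g₁^λ(z) − g₂(z)) dz (assumed finite), and set π(x) = exp(−g₁(x) − g₂(x)) and π^λ(x) = exp(−g₁^λ(x) − g₂(x))/Z_λ. Then for any f : ℝⁿ → ℝ integrable with respect to both π(x)dx and π^λ(x)dx, one has |∫ f π^λ dx − ∫ f π dx| ≤ (exp(L²λ) − 1) ∫ |f| π dx, and likewise |∫ f π^λ dx − ∫ f π dx| ≤ (exp(L²λ) − 1) ∫ |f| π^λ dx. -/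

import Mathlib

/-!
Since `g₁` is `L`-Lipschitz, Young's inequality `L t ≤ t² / (2λ) + L² λ / 2` gives
`g₁ - L² λ / 2 ≤ g₁^λ ≤ g₁`. Hence the unnormalised smoothed density `r = exp(-g₁^λ - g₂)`
satisfies `π ≤ r ≤ e π` with `e = exp(L² λ / 2)`, so `1 ≤ Z_λ ≤ e` and the two normalised
densities are within a factor `e` of each other. This gives `|π^λ - π| ≤ (e² - 1) π` and
`|π - π^λ| ≤ (e² - 1) π^λ` pointwise, and both bounds follow by integrating against `|f|`.
-/

open MeasureTheory

/-- The Moreau–Yosida envelope of `g` with parameter `lam`. -/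
noncomputable def mye {n : ℕ} (g : EuclideanSpace ℝ (Fin n) → ℝ) (lam : ℝ)
    (x : EuclideanSpace ℝ (Fin n)) : ℝ :=
  ⨅ z : EuclideanSpace ℝ (Fin n), (g z + ‖x - z‖ ^ 2 / (2 * lam))

section MoreauEnvelope

variable {n : ℕ} {g : EuclideanSpace ℝ (Fin n) → ℝ} {L lam : ℝ}

lemma sub_le_add_norm_sub_sq_div (hLip : ∀ x z, g x - g z ≤ L * ‖x - z‖) (hlam : 0 < lam)
    (x z : EuclideanSpace ℝ (Fin n)) :
    g x - L ^ 2 * lam / 2 ≤ g z + ‖x - z‖ ^ 2 / (2 * lam) := by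
  have young : L * ‖x - z‖ - L ^ 2 * lam / 2 ≤ ‖x - z‖ ^ 2 / (2 * lam) := by
    rw [le_div_iff₀ (by positivity)]
    nlinarith [sq_nonneg (‖x - z‖ - L * lam)]
  linarith [hLip x z]

lemma sub_le_mye (hLip : ∀ x z, g x - g z ≤ L * ‖x - z‖) (hlam : 0 < lam)
    (x : EuclideanSpace ℝ (Fin n)) : g x - L ^ 2 * lam / 2 ≤ mye g lam x :=
  le_ciInf (sub_le_add_norm_sub_sq_div hLip hlam x)

lemma mye_le (hLip : ∀ x z, g x - g z ≤ L * ‖x - z‖) (hlam : 0 < lam)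
    (x : EuclideanSpace ℝ (Fin n)) : mye g lam x ≤ g x := by
  have hbdd : BddBelow (Set.range fun z => g z + ‖x - z‖ ^ 2 / (2 * lam)) :=
    ⟨_, Set.forall_mem_range.2 (sub_le_add_norm_sub_sq_div hLip hlam x)⟩
  simpa [mye] using ciInf_le hbdd x

end MoreauEnvelope

lemma abs_sub_le_sq_sub_one_mul {p q e : ℝ} (hp : 0 ≤ p) (he : 1 ≤ e)
    (hpq : p ≤ e * q) (hqp : q ≤ e * p) : |q - p| ≤ (e ^ 2 - 1) * p := by
  have hep : e * p ≤ e ^ 2 * p := by nlinarith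
  rw [abs_le]
  constructor <;> nlinarith

section Densities

variable {α : Type*} [MeasurableSpace α] {μ : Measure α} {p r : α → ℝ} {e : ℝ}

lemma one_le_integral_of_le (hp1 : ∫ x, p x ∂μ = 1) (hr : Integrable r μ) (hpr : ∀ x, p x ≤ r x) :
    1 ≤ ∫ x, r x ∂μ :=
  hp1 ▸ integral_mono (.of_integral_ne_zero (hp1 ▸ one_ne_zero)) hr hpr

lemma integral_le_of_le_mul (hp1 : ∫ x, p x ∂μ = 1) (hr : Integrable r μ)
    (hrp : ∀ x, r x ≤ e * p x) : ∫ x, r x ∂μ ≤ e := by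
  have hpint : Integrable p μ := .of_integral_ne_zero (hp1 ▸ one_ne_zero)
  calc ∫ x, r x ∂μ ≤ ∫ x, e * p x ∂μ := integral_mono hr (hpint.const_mul e) hrp
    _ = e := by rw [integral_const_mul, hp1, mul_one]

lemma le_mul_div_integral (hp : ∀ x, 0 ≤ p x) (hp1 : ∫ x, p x ∂μ = 1) (hr : Integrable r μ)
    (hpr : ∀ x, p x ≤ r x) (hrp : ∀ x, r x ≤ e * p x) (x : α) :
    p x ≤ e * (r x / ∫ y, r y ∂μ) := by
  have hZ1 := one_le_integral_of_le hp1 hr hpr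
  have hZe := integral_le_of_le_mul hp1 hr hrp
  rw [mul_div_assoc', le_div_iff₀ (by linarith)]
  calc p x * ∫ y, r y ∂μ ≤ e * p x :=
        (mul_le_mul_of_nonneg_left hZe (hp x)).trans_eq (mul_comm _ _)
    _ ≤ e * r x := mul_le_mul_of_nonneg_left (hpr x) (by linarith)

lemma div_integral_le_mul (hp : ∀ x, 0 ≤ p x) (hp1 : ∫ x, p x ∂μ = 1) (hr : Integrable r μ)
    (hpr : ∀ x, p x ≤ r x) (hrp : ∀ x, r x ≤ e * p x) (x : α) :
    r x / ∫ y, r y ∂μ ≤ e * p x :=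
  (div_le_self ((hp x).trans (hpr x)) (one_le_integral_of_le hp1 hr hpr)).trans (hrp x)

end Densities

lemma abs_integral_mul_sub_integral_mul_le {α : Type*} [MeasurableSpace α] {μ : Measure α}
    {f p q : α → ℝ} {c : ℝ} (hp : ∀ x, 0 ≤ p x) (hfp : Integrable (fun x => f x * p x) μ)
    (hfq : Integrable (fun x => f x * q x) μ) (hqp : ∀ x, |q x - p x| ≤ c * p x) :
    |(∫ x, f x * q x ∂μ) - ∫ x, f x * p x ∂μ| ≤ c * ∫ x, |f x| * p x ∂μ := by
  have habs : Integrable (fun x => |f x| * p x) μ :=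
    hfp.norm.congr (.of_forall fun x => by simp [abs_of_nonneg (hp x)])
  rw [← integral_sub hfq hfp, ← integral_const_mul, ← Real.norm_eq_abs]
  refine norm_integral_le_of_norm_le (habs.const_mul c) (.of_forall fun x => ?_)
  calc ‖f x * q x - f x * p x‖ = |f x| * |q x - p x| := by
        rw [← mul_sub, Real.norm_eq_abs, abs_mul]
    _ ≤ |f x| * (c * p x) := mul_le_mul_of_nonneg_left (hqp x) (abs_nonneg _)
    _ = c * (|f x| * p x) := by ring

theorem stmt_5_general {n : ℕ} (g₁ g₂ : EuclideanSpace ℝ (Fin n) → ℝ) (L lam : ℝ)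
    (hLip : ∀ x y, |g₁ x - g₁ y| ≤ L * ‖x - y‖)
    (hlam : 0 < lam)
    (hnorm : ∫ x : EuclideanSpace ℝ (Fin n), Real.exp (-g₁ x - g₂ x) = 1)
    (hZ : Integrable (fun z : EuclideanSpace ℝ (Fin n) =>
      Real.exp (-(mye g₁ lam z) - g₂ z)))
    (f : EuclideanSpace ℝ (Fin n) → ℝ)
    (hf : Integrable (fun x => f x * Real.exp (-g₁ x - g₂ x)))
    (hflam : Integrable (fun x =>
      f x * (Real.exp (-(mye g₁ lam x) - g₂ x) /
        ∫ z : EuclideanSpace ℝ (Fin n), Real.exp (-(mye g₁ lam z) - g₂ z)))) :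
    |(∫ x, f x * (Real.exp (-(mye g₁ lam x) - g₂ x) /
          ∫ z : EuclideanSpace ℝ (Fin n), Real.exp (-(mye g₁ lam z) - g₂ z))) -
        ∫ x, f x * Real.exp (-g₁ x - g₂ x)| ≤
      (Real.exp (L ^ 2 * lam) - 1) * ∫ x, |f x| * Real.exp (-g₁ x - g₂ x) ∧
    |(∫ x, f x * (Real.exp (-(mye g₁ lam x) - g₂ x) /
          ∫ z : EuclideanSpace ℝ (Fin n), Real.exp (-(mye g₁ lam z) - g₂ z))) -
        ∫ x, f x * Real.exp (-g₁ x - g₂ x)| ≤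
      (Real.exp (L ^ 2 * lam) - 1) *
        ∫ x, |f x| * (Real.exp (-(mye g₁ lam x) - g₂ x) /
          ∫ z : EuclideanSpace ℝ (Fin n), Real.exp (-(mye g₁ lam z) - g₂ z)) := by
  have hLip' : ∀ x z, g₁ x - g₁ z ≤ L * ‖x - z‖ := fun x z => (abs_le.mp (hLip x z)).2
  set e := Real.exp (L ^ 2 * lam / 2)
  have he : 1 ≤ e := Real.one_le_exp (by positivity)
  have hee : Real.exp (L ^ 2 * lam) = e ^ 2 := by rw [pow_two e, ← Real.exp_add, add_halves]
  have hpr : ∀ x, Real.exp (-g₁ x - g₂ x) ≤ Real.exp (-(mye g₁ lam x) - g₂ x) := fun x =>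
    Real.exp_le_exp.2 (by linarith [mye_le hLip' hlam x])
  have hrp : ∀ x, Real.exp (-(mye g₁ lam x) - g₂ x) ≤ e * Real.exp (-g₁ x - g₂ x) := fun x => by
    rw [← Real.exp_add]
    exact Real.exp_le_exp.2 (by linarith [sub_le_mye hLip' hlam x])
  have hp x : 0 ≤ Real.exp (-g₁ x - g₂ x) := (Real.exp_pos _).le
  have hpq := le_mul_div_integral hp hnorm hZ hpr hrp
  have hqp := div_integral_le_mul hp hnorm hZ hpr hrp
  have hq x : 0 ≤ Real.exp (-(mye g₁ lam x) - g₂ x) /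
      ∫ z : EuclideanSpace ℝ (Fin n), Real.exp (-(mye g₁ lam z) - g₂ z) := by
    positivity
  rw [hee]
  refine ⟨abs_integral_mul_sub_integral_mul_le hp hf hflam fun x =>
    abs_sub_le_sq_sub_one_mul (hp x) he (hpq x) (hqp x), ?_⟩
  rw [abs_sub_comm]
  exact abs_integral_mul_sub_integral_mul_le hq hflam hf fun x =>
    abs_sub_le_sq_sub_one_mul (hq x) he (hqp x) (hpq x)

theorem stmt_5 {n : ℕ} (g₁ g₂ : EuclideanSpace ℝ (Fin n) → ℝ) (L lam : ℝ)
    (hconv : ConvexOn ℝ Set.univ g₁)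
    (hLip : ∀ x y, |g₁ x - g₁ y| ≤ L * ‖x - y‖)
    (hg₂ : Measurable g₂)
    (hlam : 0 < lam)
    (hnorm : ∫ x : EuclideanSpace ℝ (Fin n), Real.exp (-g₁ x - g₂ x) = 1)
    (hZ : Integrable (fun z : EuclideanSpace ℝ (Fin n) =>
      Real.exp (-(mye g₁ lam z) - g₂ z)))
    (f : EuclideanSpace ℝ (Fin n) → ℝ)
    (hf : Integrable (fun x => f x * Real.exp (-g₁ x - g₂ x)))
    (hflam : Integrable (fun x =>
      f x * (Real.exp (-(mye g₁ lam x) - g₂ x) /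
        ∫ z : EuclideanSpace ℝ (Fin n), Real.exp (-(mye g₁ lam z) - g₂ z)))) :
    |(∫ x, f x * (Real.exp (-(mye g₁ lam x) - g₂ x) /
          ∫ z : EuclideanSpace ℝ (Fin n), Real.exp (-(mye g₁ lam z) - g₂ z))) -
        ∫ x, f x * Real.exp (-g₁ x - g₂ x)| ≤
      (Real.exp (L ^ 2 * lam) - 1) * ∫ x, |f x| * Real.exp (-g₁ x - g₂ x) ∧
    |(∫ x, f x * (Real.exp (-(mye g₁ lam x) - g₂ x) /
          ∫ z : EuclideanSpace ℝ (Fin n), Real.exp (-(mye g₁ lam z) - g₂ z))) -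
        ∫ x, f x * Real.exp (-g₁ x - g₂ x)| ≤
      (Real.exp (L ^ 2 * lam) - 1) *
        ∫ x, |f x| * (Real.exp (-(mye g₁ lam x) - g₂ x) /
          ∫ z : EuclideanSpace ℝ (Fin n), Real.exp (-(mye g₁ lam z) - g₂ z)) :=
  stmt_5_general g₁ g₂ L lam hLip hlam hnorm hZ f hf hflam
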